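/- Let n ≥ 2, A > 0, α ≥ 0, η > 0, a > 2, and let β satisfy n+1 ≤ β < α + 2n − 1 − (2n−2)/a; set b = 2(n+α)/(a(β−n+1) + 2n − 2). Then there exists ε > 0 (depending only on a, η, A, α, β and n) such that the function W(x) = −((x_n/ε)^{2/a} − |x'|²)^{1/b} satisfies det D²W(x) ≥ A·x_n^{β−n−1}·|W(x)|^{−α} at every point x = (x', x_n) with x_n > 0 and x_n ≥ η·|x'|^a, where det D²W denotes the determinant of the Hessian matrix of W. -/

import Mathlib

/-- The determinant of the Hessian matrix of `u` at `x`. -/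
noncomputable def hessianDet {n : ℕ} (u : EuclideanSpace ℝ (Fin n) → ℝ)
    (x : EuclideanSpace ℝ (Fin n)) : ℝ :=
  (Matrix.of fun i j : Fin n =>
    iteratedFDeriv ℝ 2 u x ![EuclideanSpace.single i (1 : ℝ), EuclideanSpace.single j (1 : ℝ)]).det

/-- The last coordinate index of `Fin n`. -/
def lastIdx (n : ℕ) (hn : 0 < n) : Fin n := ⟨n - 1, Nat.sub_lt hn one_pos⟩

/-!
Write `W = φ ∘ f` with `f(y) = (y_n/ε)^m - |y'|²`, `φ(t) = -t^c`, `m = 2/a` and `c = 1/b`. Since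
`f` is a sum of functions of one coordinate each, `D²W = φ'(f) D²f + φ''(f) ∇f ⊗ ∇f` is a diagonal
matrix plus a rank-one matrix, and the matrix determinant lemma gives, with `P = (x_n/ε)^m`,
`ρ = |x'|²` and `F = P - ρ`,
  `det D²W = (2c)^(n-1) c m F^((c-1)n-1) P ((1-cm)P - (1-m)(2c-1)ρ) / x_n²`.
On the region `ρ ≤ (ε/η)^m P`, so for small `ε` both `F` and the last factor are comparable to
`P` (the latter because `cm < 1`, which is the upper bound on `β`). The choice of `b` makes
`m (c(n+α) - n + 1) = β - n + 1`, so the powers of `x_n` on both sides agree and the inequality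
reduces to `A ε^(β-n+1) ≤ const`, true for small `ε`.
-/

open Finset Matrix Filter Topology

theorem Matrix.det_diagonal_add_vecMulVec {ι R : Type*} [Fintype ι] [DecidableEq ι] [Field R]
    {d : ι → R} (hd : ∀ i, d i ≠ 0) (u v : ι → R) :
    (diagonal d + vecMulVec u v).det = (∏ i, d i) * (1 + ∑ i, u i * v i / d i) := by
  have h : diagonal d + vecMulVec u v = diagonal d * (1 + vecMulVec (fun i => u i / d i) v) := by
    ext i j
    simp only [add_apply, diagonal_mul, vecMulVec_apply, mul_add, ← mul_assoc,
      mul_div_cancel₀ _ (hd i)]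
    simp [diagonal_apply, one_apply]
  rw [h, det_mul, det_diagonal, vecMulVec_eq Unit, det_one_add_replicateCol_mul_replicateRow]
  simp only [dotProduct, mul_div_assoc', mul_comm]

theorem Matrix.det_diagonal_ite_add_smul_vecMulVec {ι R : Type*} [Fintype ι] [DecidableEq ι]
    [Field R] (ℓ : ι) {d d₀ : R} (hd : d ≠ 0) (hd₀ : d₀ ≠ 0) (k : R) (w : ι → R) :
    (diagonal (fun i => if i = ℓ then d else d₀) + vecMulVec (k • w) w).det =
      d * d₀ ^ (Fintype.card ι - 1) *
        (1 + k * (w ℓ ^ 2 / d + (∑ i ∈ univ.erase ℓ, w i ^ 2) / d₀)) := by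
  rw [det_diagonal_add_vecMulVec fun i => by split_ifs <;> assumption,
    ← mul_prod_erase _ _ (mem_univ ℓ), ← add_sum_erase _ _ (mem_univ ℓ),
    prod_congr rfl fun i hi => if_neg (ne_of_mem_erase hi), prod_const,
    sum_congr rfl fun i hi => by rw [if_neg (ne_of_mem_erase hi)], card_erase_of_mem (mem_univ ℓ),
    card_univ, if_pos rfl, sum_div, mul_add k, mul_sum]
  simp only [Pi.smul_apply, smul_eq_mul, mul_div_assoc, sq, mul_assoc]

section Hessian

variable {n : ℕ} {x : EuclideanSpace ℝ (Fin n)}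

theorem hessianDet_eq_of_hasFDerivAt {u : EuclideanSpace ℝ (Fin n) → ℝ}
    {Du : EuclideanSpace ℝ (Fin n) → EuclideanSpace ℝ (Fin n) →L[ℝ] ℝ}
    {D2u : EuclideanSpace ℝ (Fin n) →L[ℝ] EuclideanSpace ℝ (Fin n) →L[ℝ] ℝ}
    (hu : ∀ᶠ y in 𝓝 x, HasFDerivAt u (Du y) y) (hDu : HasFDerivAt Du D2u x) :
    hessianDet u x =
      (of fun i j => D2u (EuclideanSpace.single i 1) (EuclideanSpace.single j 1)).det := by
  have h : fderiv ℝ (fderiv ℝ u) x = D2u :=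
    (hDu.congr_of_eventuallyEq (hu.mono fun y hy => hy.fderiv)).fderiv
  simp [hessianDet, iteratedFDeriv_two_apply, h]

theorem hessianDet_comp_eq {f : EuclideanSpace ℝ (Fin n) → ℝ}
    {Df : EuclideanSpace ℝ (Fin n) → EuclideanSpace ℝ (Fin n) →L[ℝ] ℝ}
    {D2f : EuclideanSpace ℝ (Fin n) →L[ℝ] EuclideanSpace ℝ (Fin n) →L[ℝ] ℝ}
    {φ φ' : ℝ → ℝ} {φ'' : ℝ}
    (hf : ∀ᶠ y in 𝓝 x, HasFDerivAt f (Df y) y) (hDf : HasFDerivAt Df D2f x)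
    (hφ : ∀ᶠ t in 𝓝 (f x), HasDerivAt φ (φ' t) t) (hφ' : HasDerivAt φ' φ'' (f x)) :
    hessianDet (φ ∘ f) x =
      (of fun i j => φ' (f x) * D2f (EuclideanSpace.single i 1) (EuclideanSpace.single j 1) +
        φ'' * Df x (EuclideanSpace.single i 1) * Df x (EuclideanSpace.single j 1)).det := by
  have hφf : ∀ᶠ y in 𝓝 x, HasDerivAt φ (φ' (f y)) (f y) :=
    hf.self_of_nhds.continuousAt.tendsto.eventually hφ
  rw [hessianDet_eq_of_hasFDerivAt (hφf.and hf |>.mono fun y hy => hy.1.comp_hasFDerivAt y hy.2)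
    ((hφ'.comp_hasFDerivAt x hf.self_of_nhds).smul hDf)]
  rfl

theorem hasFDerivAt_sum_apply {g : Fin n → ℝ → ℝ} {g' : Fin n → ℝ}
    (hg : ∀ i, HasDerivAt (g i) (g' i) (x i)) :
    HasFDerivAt (fun y : EuclideanSpace ℝ (Fin n) => ∑ i, g i (y i))
      (∑ i, g' i • EuclideanSpace.proj (𝕜 := ℝ) i) x :=
  HasFDerivAt.fun_sum fun i _ =>
    (hg i).comp_hasFDerivAt x (EuclideanSpace.proj (𝕜 := ℝ) i).hasFDerivAt

theorem hasFDerivAt_sum_smul_proj {g' : Fin n → ℝ → ℝ} {g'' : Fin n → ℝ}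
    (hg' : ∀ i, HasDerivAt (g' i) (g'' i) (x i)) :
    HasFDerivAt
      (fun y : EuclideanSpace ℝ (Fin n) => ∑ i, g' i (y i) • EuclideanSpace.proj (𝕜 := ℝ) i)
      (∑ i, (g'' i • EuclideanSpace.proj (𝕜 := ℝ) i).smulRight (EuclideanSpace.proj (𝕜 := ℝ) i))
      x :=
  HasFDerivAt.fun_sum fun i _ =>
    ((hg' i).comp_hasFDerivAt x (EuclideanSpace.proj (𝕜 := ℝ) i).hasFDerivAt).smul_const
      (EuclideanSpace.proj (𝕜 := ℝ) i)

theorem hessianDet_comp_sum_apply {g g' : Fin n → ℝ → ℝ} {g'' : Fin n → ℝ}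
    {φ φ' : ℝ → ℝ} {φ'' : ℝ}
    (hg : ∀ i, ∀ᶠ t in 𝓝 (x i), HasDerivAt (g i) (g' i t) t)
    (hg' : ∀ i, HasDerivAt (g' i) (g'' i) (x i))
    (hφ : ∀ᶠ t in 𝓝 (∑ i, g i (x i)), HasDerivAt φ (φ' t) t)
    (hφ' : HasDerivAt φ' φ'' (∑ i, g i (x i))) :
    hessianDet (fun y => φ (∑ i, g i (y i))) x =
      (diagonal (fun i => φ' (∑ i, g i (x i)) * g'' i) +
        vecMulVec (φ'' • fun i => g' i (x i)) (fun i => g' i (x i))).det := by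
  have hgy : ∀ᶠ y in 𝓝 x, ∀ i, HasDerivAt (g i) (g' i (y i)) (y i) :=
    eventually_all.2 fun i =>
      (EuclideanSpace.proj (𝕜 := ℝ) i).continuous.continuousAt.tendsto.eventually (hg i)
  refine (hessianDet_comp_eq (hgy.mono fun y hy => hasFDerivAt_sum_apply hy)
    (hasFDerivAt_sum_smul_proj hg') hφ hφ').trans (congrArg det ?_)
  ext i j
  simp [diagonal_apply, vecMulVec_apply, mul_assoc]

end Hessian

theorem hasDerivAt_div_rpow {ε t : ℝ} (hε : 0 < ε) (ht : 0 < t) (p : ℝ) :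
    HasDerivAt (fun t => (t / ε) ^ p) (p / ε * (t / ε) ^ (p - 1)) t := by
  convert ((hasDerivAt_id' t).div_const ε).rpow_const (p := p) (Or.inl (by positivity)) using 1
  ring

theorem sum_ite_apply_eq_sub {n : ℕ} (ℓ : Fin n) (h : ℝ → ℝ) (y : Fin n → ℝ) :
    ∑ i, (if i = ℓ then h else fun t => -t ^ 2) (y i) = h (y ℓ) - ∑ j ∈ univ.erase ℓ, y j ^ 2 := by
  rw [← add_sum_erase _ _ (mem_univ ℓ), if_pos rfl, sub_eq_add_neg, ← sum_neg_distrib]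
  congr 1
  exact sum_congr rfl fun j hj => by rw [if_neg (ne_of_mem_erase hj)]

/-- The paper's `W`, with `m = 2/a` and `c = 1/b`. -/
noncomputable def barrier {n : ℕ} (ℓ : Fin n) (m c ε : ℝ) (y : EuclideanSpace ℝ (Fin n)) : ℝ :=
  -(((y ℓ / ε) ^ m - ∑ j ∈ univ.erase ℓ, y j ^ 2) ^ c)

section Barrier

variable {n : ℕ} (ℓ : Fin n) {m c ε P ρ : ℝ} {x : EuclideanSpace ℝ (Fin n)}

theorem hessianDet_barrier_eq_det (hε : 0 < ε) (hx : 0 < x ℓ) (hP : (x ℓ / ε) ^ m = P)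
    (hρ : ∑ j ∈ univ.erase ℓ, x j ^ 2 = ρ) (hF : 0 < P - ρ) :
    hessianDet (barrier ℓ m c ε) x =
      (diagonal (fun i => if i = ℓ then c * m * (1 - m) * (P - ρ) ^ (c - 1) * P / x ℓ ^ 2
          else 2 * c * (P - ρ) ^ (c - 1)) +
        vecMulVec ((-(c * (c - 1) * (P - ρ) ^ (c - 1) / (P - ρ))) •
          fun i => if i = ℓ then m * P / x ℓ else -2 * x i)
          (fun i => if i = ℓ then m * P / x ℓ else -2 * x i)).det := by
  set g : Fin n → ℝ → ℝ := fun i => if i = ℓ then fun t => (t / ε) ^ m else fun t => -t ^ 2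
  set g' : Fin n → ℝ → ℝ := fun i =>
    if i = ℓ then fun t => m / ε * (t / ε) ^ (m - 1) else fun t => -2 * t
  set g'' : Fin n → ℝ := fun i => if i = ℓ then m * (m - 1) * P / x ℓ ^ 2 else -2
  have hpow1 : (x ℓ / ε) ^ (m - 1) = P * ε / x ℓ := by
    rw [Real.rpow_sub_one (by positivity), hP, div_div_eq_mul_div]
  have hpow2 : (x ℓ / ε) ^ (m - 1 - 1) = P * ε ^ 2 / x ℓ ^ 2 := by
    rw [sub_sub, one_add_one_eq_two, Real.rpow_sub (by positivity), Real.rpow_two, hP, div_pow,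
      div_div_eq_mul_div]
  have hsum : ∀ y : EuclideanSpace ℝ (Fin n),
      ∑ i, g i (y i) = (y ℓ / ε) ^ m - ∑ j ∈ univ.erase ℓ, y j ^ 2 :=
    fun y => sum_ite_apply_eq_sub ℓ _ y
  have hgx : ∑ i, g i (x i) = P - ρ := by rw [hsum, hP, hρ]
  have hg : ∀ i, ∀ᶠ t in 𝓝 (x i), HasDerivAt (g i) (g' i t) t := by
    intro i
    by_cases hi : i = ℓ
    · subst hi
      filter_upwards [Ioi_mem_nhds hx] with t ht
      simpa [g, g'] using hasDerivAt_div_rpow hε ht m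
    · refine Eventually.of_forall fun t => ?_
      simpa [g, g', hi, mul_comm] using (hasDerivAt_pow 2 t).fun_neg
  have hg' : ∀ i, HasDerivAt (g' i) (g'' i) (x i) := by
    intro i
    by_cases hi : i = ℓ
    · subst hi
      simp only [g', g'', if_pos]
      refine ((hasDerivAt_div_rpow hε hx (m - 1)).const_mul (m / ε)).congr_deriv ?_
      rw [hpow2]
      field_simp
    · simpa [g', g'', hi] using (hasDerivAt_id (x i)).const_mul (-2)
  have hφ : ∀ᶠ t in 𝓝 (∑ i, g i (x i)), HasDerivAt (fun t => -t ^ c) (-(c * t ^ (c - 1))) t := by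
    rw [hgx]
    filter_upwards [Ioi_mem_nhds hF] with t ht
    exact (Real.hasDerivAt_rpow_const (Or.inl ht.ne')).neg
  have hφ' : HasDerivAt (fun t => -(c * t ^ (c - 1)))
      (-(c * (c - 1) * (P - ρ) ^ (c - 1) / (P - ρ))) (∑ i, g i (x i)) := by
    rw [hgx]
    refine ((Real.hasDerivAt_rpow_const (Or.inl hF.ne')).const_mul c).neg.congr_deriv ?_
    rw [Real.rpow_sub_one hF.ne']
    ring
  have hW : barrier ℓ m c ε = fun y => (fun t => -t ^ c) (∑ i, g i (y i)) :=
    funext fun y => by simp only [barrier, hsum]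
  rw [hW, hessianDet_comp_sum_apply hg hg' hφ hφ', hgx]
  have hgrad : (fun i => g' i (x i)) = fun i => if i = ℓ then m * P / x ℓ else -2 * x i := by
    ext i
    by_cases hi : i = ℓ
    · subst hi
      simp only [g', if_pos, hpow1]
      field_simp
    · simp [g', hi]
  rw [hgrad]
  congr 3
  ext i
  by_cases hi : i = ℓ <;> simp [g'', hi] <;> ring

theorem hessianDet_barrier (hm0 : m ≠ 0) (hm1 : m ≠ 1) (hc : c ≠ 0) (hε : 0 < ε) (hx : 0 < x ℓ)
    (hP : (x ℓ / ε) ^ m = P) (hρ : ∑ j ∈ univ.erase ℓ, x j ^ 2 = ρ) (hF : 0 < P - ρ) :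
    hessianDet (barrier ℓ m c ε) x =
      (2 * c) ^ (n - 1) * c * m * (P - ρ) ^ ((c - 1) * n - 1) * P *
        ((1 - c * m) * P - (1 - m) * (2 * c - 1) * ρ) / x ℓ ^ 2 := by
  have hP0 : 0 < P := hP ▸ Real.rpow_pos_of_pos (by positivity) _
  have hu : 0 < (P - ρ) ^ (c - 1) := Real.rpow_pos_of_pos hF _
  have hgrad : ∑ i ∈ univ.erase ℓ, (if i = ℓ then m * P / x ℓ else -2 * x i) ^ 2 = 4 * ρ := by
    rw [← hρ, mul_sum]
    exact sum_congr rfl fun i hi => by rw [if_neg (ne_of_mem_erase hi)]; ring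
  have hFn : (P - ρ) ^ ((c - 1) * n - 1) =
      ((P - ρ) ^ (c - 1)) ^ (n - 1) * (P - ρ) ^ (c - 1) / (P - ρ) := by
    rw [Real.rpow_sub_one hF.ne', ← pow_succ, Nat.sub_add_cancel ℓ.pos,
      Real.rpow_mul_natCast hF.le]
  have hs := hx.ne'
  rw [hessianDet_barrier_eq_det ℓ hε hx hP hρ hF, det_diagonal_ite_add_smul_vecMulVec ℓ
    (by simp [hc, hm0, sub_eq_zero, hm1.symm, hu.ne', hP0.ne', hs])
    (by simp [hc, hu.ne']), Fintype.card_fin, if_pos rfl, hgrad, hFn]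
  field_simp
  ring

theorem le_hessianDet_barrier {α β A : ℝ} (hm0 : 0 < m) (hm1 : m < 1) (hc : 0 < c) (hcm : c * m < 1)
    (hexp : m * (c * (n + α) - n + 1) = β - n + 1) (hr : n + 1 ≤ c * (n + α))
    (hε : 0 < ε) (hx : 0 < x ℓ) (hP : (x ℓ / ε) ^ m = P) (hρ : ∑ j ∈ univ.erase ℓ, x j ^ 2 = ρ)
    (hρP : ρ ≤ P / 2) (hρQ : (1 - m) * (2 * c - 1) * ρ ≤ (1 - c * m) / 2 * P)
    (hA : A * ε ^ (β - n + 1) ≤ (2 * c) ^ (n - 1) * c * m * (1 - c * m) / 2 ^ (c * (n + α) - n)) :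
    A * x ℓ ^ (β - n - 1) * |barrier ℓ m c ε x| ^ (-α) ≤ hessianDet (barrier ℓ m c ε) x := by
  have hP0 : 0 < P := hP ▸ Real.rpow_pos_of_pos (by positivity) _
  have hρ0 : 0 ≤ ρ := hρ ▸ sum_nonneg fun j _ => sq_nonneg _
  have hF : 0 < P - ρ := by linarith
  rw [hessianDet_barrier ℓ hm0.ne' hm1.ne hc.ne' hε hx hP hρ hF, barrier, hP, hρ, abs_neg,
    abs_of_pos (Real.rpow_pos_of_pos hF c)]
  set r := c * (n + α) - n - 1 with hr_def
  set γ := β - n + 1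
  set K := (2 * c) ^ (n - 1) * c * m * (1 - c * m)
  have hsplit : (P - ρ) ^ ((c - 1) * n - 1) = (P - ρ) ^ r * ((P - ρ) ^ c) ^ (-α) := by
    rw [← Real.rpow_mul hF.le, ← Real.rpow_add hF, hr_def]
    ring_nf
  have hPr : (P / 2) ^ r ≤ (P - ρ) ^ r :=
    Real.rpow_le_rpow (by positivity) (by linarith) (by linarith)
  have hQ : (1 - c * m) / 2 * P ≤ (1 - c * m) * P - (1 - m) * (2 * c - 1) * ρ := by linarith
  have hPγ : P ^ r * P ^ 2 = x ℓ ^ γ / ε ^ γ := by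
    rw [← Real.rpow_two, ← Real.rpow_add hP0, ← hP, ← Real.rpow_mul (by positivity),
      Real.div_rpow hx.le hε.le, ← hexp, hr_def]
    ring_nf
  have hsγ : x ℓ ^ (β - n - 1) = x ℓ ^ γ / x ℓ ^ 2 := by
    rw [← Real.rpow_two, ← Real.rpow_sub hx]
    congr 1
    ring
  calc A * x ℓ ^ (β - n - 1) * ((P - ρ) ^ c) ^ (-α)
      ≤ K / 2 ^ (r + 1) / ε ^ γ * x ℓ ^ (β - n - 1) * ((P - ρ) ^ c) ^ (-α) := by
        gcongr
        rwa [show r + 1 = c * (n + α) - n by rw [hr_def]; ring, le_div_iff₀ (by positivity)]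
    _ = (2 * c) ^ (n - 1) * c * m * ((P / 2) ^ r * ((P - ρ) ^ c) ^ (-α)) * P *
          ((1 - c * m) / 2 * P) / x ℓ ^ 2 := by
        rw [hsγ, Real.rpow_add_one two_ne_zero, Real.div_rpow hP0.le zero_le_two]
        linear_combination (-K / 2 / 2 ^ r * ((P - ρ) ^ c) ^ (-α) / x ℓ ^ 2) * hPγ
    _ ≤ (2 * c) ^ (n - 1) * c * m * (P - ρ) ^ ((c - 1) * n - 1) * P *
          ((1 - c * m) * P - (1 - m) * (2 * c - 1) * ρ) / x ℓ ^ 2 := by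
        rw [hsplit]
        gcongr

theorem exists_pos_le_hessianDet_barrier {α β η : ℝ} (A : ℝ)
    (hm0 : 0 < m) (hm1 : m < 1) (hc : 0 < c) (hcm : c * m < 1)
    (hexp : m * (c * (n + α) - n + 1) = β - n + 1) (hr : n + 1 ≤ c * (n + α)) (hη : 0 < η) :
    ∃ ε : ℝ, 0 < ε ∧ ∀ x : EuclideanSpace ℝ (Fin n), 0 < x ℓ →
      ∑ j ∈ univ.erase ℓ, x j ^ 2 ≤ (x ℓ / η) ^ m →
      A * x ℓ ^ (β - n - 1) * |barrier ℓ m c ε x| ^ (-α) ≤ hessianDet (barrier ℓ m c ε) x := by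
  have hγ : 0 < β - n + 1 := by rw [← hexp]; exact mul_pos hm0 (by linarith)
  have hK : 0 < (2 * c) ^ (n - 1) * c * m * (1 - c * m) / 2 ^ (c * (n + α) - n) := by
    have : 0 < 1 - c * m := by linarith
    positivity
  have hδ : Tendsto (fun ε => (ε / η) ^ m) (𝓝 0) (𝓝 0) := by
    simpa [Real.zero_rpow hm0.ne'] using
      ((continuous_id.div_const η).rpow_const fun _ => Or.inr hm0.le).tendsto 0
  have hAε : Tendsto (fun ε => A * ε ^ (β - n + 1)) (𝓝 0) (𝓝 0) := by
    simpa [Real.zero_rpow hγ.ne'] using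
      ((continuous_id.rpow_const fun _ => Or.inr hγ.le).tendsto 0).const_mul A
  have hTδ : Tendsto (fun ε => (1 - m) * |2 * c - 1| * (ε / η) ^ m) (𝓝 0) (𝓝 0) := by
    simpa using hδ.const_mul ((1 - m) * |2 * c - 1|)
  have hsmall := (hδ.eventually (ge_mem_nhds one_half_pos)).and <|
    (hTδ.eventually (ge_mem_nhds (by linarith : 0 < (1 - c * m) / 2))).and
      (hAε.eventually (ge_mem_nhds hK))
  obtain ⟨ε, ⟨hδ2, hδQ, hεA⟩, hε⟩ :=
    ((hsmall.filter_mono nhdsWithin_le_nhds).and (self_mem_nhdsWithin (s := Set.Ioi 0))).exists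
  refine ⟨ε, hε, fun x hx hreg => ?_⟩
  have hP : 0 < (x ℓ / ε) ^ m := Real.rpow_pos_of_pos (div_pos hx hε) _
  have hρ0 : 0 ≤ ∑ j ∈ univ.erase ℓ, x j ^ 2 := sum_nonneg fun j _ => sq_nonneg _
  have hρδ : ∑ j ∈ univ.erase ℓ, x j ^ 2 ≤ (ε / η) ^ m * (x ℓ / ε) ^ m := by
    rwa [← Real.mul_rpow (div_pos hε hη).le (div_pos hx hε).le,
      show ε / η * (x ℓ / ε) = x ℓ / η by field_simp]
  refine le_hessianDet_barrier ℓ hm0 hm1 hc hcm hexp hr hε hx rfl rfl ?_ ?_ hεA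
  · nlinarith
  · calc (1 - m) * (2 * c - 1) * ∑ j ∈ univ.erase ℓ, x j ^ 2
        ≤ (1 - m) * |2 * c - 1| * ((ε / η) ^ m * (x ℓ / ε) ^ m) := by
          gcongr
          exact le_abs_self _
      _ ≤ (1 - c * m) / 2 * (x ℓ / ε) ^ m := by
          rw [← mul_assoc]
          gcongr

end Barrier

theorem le_div_rpow_of_mul_sqrt_rpow_le {ρ s η a : ℝ} (hρ : 0 ≤ ρ) (hη : 0 < η) (ha : 0 < a)
    (h : η * √ρ ^ a ≤ s) : ρ ≤ (s / η) ^ (2 / a) := by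
  have hsqrt : (√ρ ^ a) ^ (2 / a) = ρ := by
    rw [← Real.rpow_mul (Real.sqrt_nonneg ρ), mul_div_cancel₀ _ ha.ne', Real.rpow_two,
      Real.sq_sqrt hρ]
  calc ρ = (√ρ ^ a) ^ (2 / a) := hsqrt.symm
    _ ≤ (s / η) ^ (2 / a) := by
      gcongr
      rwa [le_div_iff₀ hη, mul_comm]

theorem barrier_exponents {n : ℕ} {α a β b : ℝ} (ha : 2 < a) (hβ : (n : ℝ) + 1 ≤ β)
    (hβ' : β < α + 2 * n - 1 - (2 * n - 2) / a)
    (hb : b = 2 * ((n : ℝ) + α) / (a * (β - n + 1) + 2 * n - 2)) :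
    0 < 1 / b ∧ 1 / b * (2 / a) < 1 ∧ 2 / a * (1 / b * (n + α) - n + 1) = β - n + 1 ∧
      n + 1 ≤ 1 / b * (n + α) := by
  have ha0 : 0 < a := by linarith
  have hn : (0 : ℝ) ≤ n := n.cast_nonneg
  have hβa : 2 * a ≤ a * (β - n + 1) := by nlinarith
  have hlt : a * (β - n + 1) + 2 * n - 2 < a * (n + α) := by
    have := (lt_sub_iff_add_lt.2 (by linarith : (2 * n - 2) / a + β < α + 2 * n - 1))
    rw [div_lt_iff₀ ha0] at this
    linarith
  have hnα : 0 < (n : ℝ) + α := pos_of_mul_pos_right (by linarith) ha0.le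
  have hc : 1 / b * (n + α) = (a * (β - n + 1) + 2 * n - 2) / 2 := by
    rw [hb]
    field_simp
  refine ⟨?_, ?_, ?_, ?_⟩
  · rw [hb, one_div_div]
    exact div_pos (by linarith) (by linarith)
  · rw [← mul_lt_mul_iff_of_pos_right hnα, mul_right_comm, hc]
    field_simp
    linarith
  · rw [hc]
    field_simp
    ring
  · rw [hc]
    linarith

/-- There is `ε > 0` such that `W(x) = -((xₙ/ε)^{2/a} - |x'|²)^{1/b}` with
`b = 2(n+α)/(a(β-n+1)+2n-2)` satisfies `det D²W ≥ A xₙ^{β-n-1} |W|^{-α}`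
on the region `{xₙ > 0, xₙ ≥ η |x'|^a}`. -/
theorem exists_subsolution_aEta_region
    (n : ℕ) (hn : 2 ≤ n) (A α η a β b : ℝ) (hη : 0 < η)
    (ha : 2 < a) (hβ : (n : ℝ) + 1 ≤ β) (hβ' : β < α + 2 * n - 1 - (2 * n - 2) / a)
    (hb : b = 2 * ((n : ℝ) + α) / (a * (β - n + 1) + 2 * n - 2)) :
    ∃ ε : ℝ, 0 < ε ∧
      ∀ x : EuclideanSpace ℝ (Fin n),
        0 < x (lastIdx n (by omega)) →
        η * Real.sqrt (∑ j ∈ Finset.univ.erase (lastIdx n (by omega)), x j ^ 2) ^ a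
            ≤ x (lastIdx n (by omega)) →
        A * x (lastIdx n (by omega)) ^ (β - n - 1) *
            |-(((x (lastIdx n (by omega)) / ε) ^ (2 / a) -
                ∑ j ∈ Finset.univ.erase (lastIdx n (by omega)), x j ^ 2) ^ (1 / b))| ^ (-α)
          ≤ hessianDet
              (fun y : EuclideanSpace ℝ (Fin n) =>
                -(((y (lastIdx n (by omega)) / ε) ^ (2 / a) -
                    ∑ j ∈ Finset.univ.erase (lastIdx n (by omega)), y j ^ 2) ^ (1 / b))) x := by
  have ha0 : 0 < a := by linarith
  obtain ⟨hc, hcm, hexp, hr⟩ := barrier_exponents ha hβ hβ' hb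
  obtain ⟨ε, hε, hW⟩ := exists_pos_le_hessianDet_barrier (lastIdx n (by omega)) A
    (div_pos two_pos ha0) ((div_lt_one ha0).2 ha) hc hcm hexp hr hη
  exact ⟨ε, hε, fun x hx hreg =>
    hW x hx (le_div_rpow_of_mul_sqrt_rpow_le (sum_nonneg fun j _ => sq_nonneg _) hη ha0 hreg)⟩
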